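/- Let f₀ ∈ L¹(ℝ²) ∩ L^∞(ℝ²) and define C(s) = min{ (√3/(2π))(1−e^{−s})^{−2}, e^{2s} } for s > 0. Then the self-similar solution satisfies ‖g̃(s)‖_{L^∞(ℝ²)} ≤ C(s) max{‖f₀‖_{L¹}, ‖f₀‖_{L^∞}}, and in particular C is bounded on [s₀, ∞) for each s₀ > 0 while C(s) = e^{2s} for small s (the two branches cross where e^{2s}(1−e^{−s})² = √3/(2π)). -/

import Mathlib

/-! The kernel `G t` is a probability density (integrating out `z` leaves the heat kernel
`(4πt)^{-1/2} e^{-v²/(4t)}`) bounded by its peak value `√3/(2πt²)`. Hence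
`|G_t * f₀| ≤ min(√3/(2πt²) ‖f₀‖₁, ‖f₀‖_∞)`, and with `t = e^s - 1` and the prefactor `e^{2s}`
the first bound becomes `√3/(2π) (1 - e^{-s})^{-2} ‖f₀‖₁`. -/

open Real MeasureTheory

/-- The Kolmogorov kernel in Lagrangian variables. -/
noncomputable def G (t v z : ℝ) : ℝ :=
  (Real.sqrt 3 / (2 * Real.pi * t ^ 2)) *
    Real.exp (-(1 / (4 * t ^ 3)) * (3 * z ^ 2 + (2 * t * v - 3 * z) ^ 2))

/-- The solution of the Lagrangian Kolmogorov equation: `g(t) = G_t * f₀`. -/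
noncomputable def sol (f₀ : ℝ × ℝ → ℝ) (t v z : ℝ) : ℝ :=
  ∫ y : ℝ × ℝ, G t (v - y.1) (z - y.2) * f₀ y

/-- The self-similar solution. -/
noncomputable def tg (f₀ : ℝ × ℝ → ℝ) (s v z : ℝ) : ℝ :=
  Real.exp (2 * s) * sol f₀ (Real.exp s - 1) (Real.exp (s / 2) * v) (Real.exp (3 * s / 2) * z)

/-- The bounding constant `C(s) = min{(√3/(2π))(1−e^{−s})^{−2}, e^{2s}}`. -/
noncomputable def Cbound (s : ℝ) : ℝ :=
  min (Real.sqrt 3 / (2 * Real.pi) * ((1 - Real.exp (-s)) ^ 2)⁻¹) (Real.exp (2 * s))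

section Kernel

variable {t : ℝ}

lemma G_nonneg (t v z : ℝ) : 0 ≤ G t v z := by
  unfold G; positivity

lemma G_le (ht : 0 < t) (v z : ℝ) : G t v z ≤ √3 / (2 * π * t ^ 2) := by
  refine mul_le_of_le_one_right (by positivity) (exp_le_one_iff.mpr ?_)
  have : 0 ≤ 1 / (4 * t ^ 3) * (3 * z ^ 2 + (2 * t * v - 3 * z) ^ 2) := by positivity
  linarith

lemma G_eq_mul_gaussian (ht : t ≠ 0) (v z : ℝ) :
    G t v z = √3 / (2 * π * t ^ 2) * exp (-(4 * t)⁻¹ * v ^ 2) *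
      exp (-(3 / t ^ 3) * (z + -(t * v / 2)) ^ 2) := by
  rw [G, mul_assoc _ (exp _), ← exp_add]
  congr 2
  field_simp
  ring

lemma integrable_G_fiber (ht : 0 < t) (v : ℝ) : Integrable (fun z => G t v z) := by
  simp_rw [G_eq_mul_gaussian ht.ne']
  exact ((integrable_exp_neg_mul_sq (by positivity)).comp_add_right _).const_mul _

lemma integral_G_fiber (ht : 0 < t) (v : ℝ) :
    ∫ z, G t v z = (√(4 * π * t))⁻¹ * exp (-(4 * t)⁻¹ * v ^ 2) := by
  simp_rw [G_eq_mul_gaussian ht.ne']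
  rw [integral_const_mul,
    integral_add_right_eq_self (fun u => exp (-(3 / t ^ 3) * u ^ 2)), integral_gaussian]
  have hc : √3 / (2 * π * t ^ 2) * √(π / (3 / t ^ 3)) = (√(4 * π * t))⁻¹ := by
    rw [← sq_eq_sq₀ (by positivity) (by positivity)]
    rw [mul_pow, div_pow, inv_pow, sq_sqrt (by positivity), sq_sqrt (by positivity),
      sq_sqrt (by positivity)]
    field_simp
    ring
  rw [← hc]
  ring

lemma integrable_G (ht : 0 < t) : Integrable (fun p : ℝ × ℝ => G t p.1 p.2) := by
  have hmeas : AEStronglyMeasurable (fun p : ℝ × ℝ => G t p.1 p.2) := by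
    unfold G; fun_prop
  rw [Measure.volume_eq_prod, integrable_prod_iff hmeas]
  refine ⟨.of_forall (integrable_G_fiber ht), ?_⟩
  simp_rw [Real.norm_of_nonneg (G_nonneg _ _ _), integral_G_fiber ht]
  exact (integrable_exp_neg_mul_sq (by positivity)).const_mul _

lemma integral_G (ht : 0 < t) : ∫ p : ℝ × ℝ, G t p.1 p.2 = 1 := by
  have hint := integrable_G ht
  rw [Measure.volume_eq_prod] at hint ⊢
  rw [integral_prod _ hint]
  simp_rw [integral_G_fiber ht]
  rw [integral_const_mul, integral_gaussian, div_inv_eq_mul, ← mul_assoc, mul_comm π]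
  exact inv_mul_cancel₀ (by positivity : √(4 * π * t) ≠ 0)

end Kernel

section Holder

variable {α : Type*} [MeasurableSpace α] {μ : Measure α} {k f : α → ℝ}

lemma norm_integral_mul_le_mul_lpNorm_one {M : ℝ} (hf : Integrable f μ)
    (hk : ∀ y, ‖k y‖ ≤ M) : ‖∫ y, k y * f y ∂μ‖ ≤ M * lpNorm f 1 μ := by
  rw [lpNorm_one_eq_integral_norm hf.1, ← integral_const_mul]
  refine norm_integral_le_of_norm_le (hf.norm.const_mul M) (.of_forall fun y => ?_)
  rw [norm_mul]
  exact mul_le_mul_of_nonneg_right (hk y) (norm_nonneg _)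

lemma norm_integral_mul_le_integral_norm_mul_lpNorm_top (hk : Integrable k μ)
    (hf : MemLp f ⊤ μ) : ‖∫ y, k y * f y ∂μ‖ ≤ (∫ y, ‖k y‖ ∂μ) * lpNorm f ⊤ μ := by
  rw [← integral_mul_const]
  refine norm_integral_le_of_norm_le (hk.norm.mul_const _) ?_
  filter_upwards [ae_le_lpNorm_exponent_top hf] with y hy
  rw [norm_mul]
  exact mul_le_mul_of_nonneg_left hy (norm_nonneg _)

end Holder

section Solution

variable {f₀ : ℝ × ℝ → ℝ} {t : ℝ}

lemma norm_sol_le_lpNorm_one (ht : 0 < t) (hf : Integrable f₀) (v z : ℝ) :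
    ‖sol f₀ t v z‖ ≤ √3 / (2 * π * t ^ 2) * lpNorm f₀ 1 volume :=
  norm_integral_mul_le_mul_lpNorm_one hf fun _ =>
    (Real.norm_of_nonneg (G_nonneg _ _ _)).trans_le (G_le ht _ _)

lemma norm_sol_le_lpNorm_top (ht : 0 < t) (hf : MemLp f₀ ⊤ volume) (v z : ℝ) :
    ‖sol f₀ t v z‖ ≤ lpNorm f₀ ⊤ volume := by
  have hk := (integrable_G ht).comp_sub_left (v, z)
  have hmass : ∫ y : ℝ × ℝ, ‖G t ((v, z) - y).1 ((v, z) - y).2‖ = 1 := by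
    simp_rw [Real.norm_of_nonneg (G_nonneg _ _ _)]
    rw [integral_sub_left_eq_self (fun p : ℝ × ℝ => G t p.1 p.2) volume (v, z), integral_G ht]
  have h := norm_integral_mul_le_integral_norm_mul_lpNorm_top hk hf
  rwa [hmass, one_mul] at h

end Solution

lemma one_sub_exp_neg_sq_inv (s : ℝ) :
    ((1 - exp (-s)) ^ 2)⁻¹ = exp (2 * s) / (exp s - 1) ^ 2 := by
  have h : 1 - (exp s)⁻¹ = (exp s - 1) / exp s := by field_simp
  rw [exp_neg, h, div_pow, inv_div, two_mul, exp_add, sq (exp s)]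

lemma norm_tg_le {f₀ : ℝ × ℝ → ℝ} (hf₁ : Integrable f₀) (hfInf : MemLp f₀ ⊤ volume)
    {s : ℝ} (hs : 0 < s) (v z : ℝ) :
    ‖tg f₀ s v z‖ ≤ Cbound s * max (lpNorm f₀ 1 volume) (lpNorm f₀ ⊤ volume) := by
  have ht : 0 < exp s - 1 := sub_pos.mpr (one_lt_exp_iff.mpr hs)
  have hN : 0 ≤ max (lpNorm f₀ 1 volume) (lpNorm f₀ ⊤ volume) :=
    le_max_of_le_left lpNorm_nonneg
  rw [tg, norm_mul, Real.norm_of_nonneg (exp_pos _).le, Cbound, min_mul_of_nonneg _ _ hN]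
  apply le_min
  · calc exp (2 * s) * ‖sol f₀ (exp s - 1) _ _‖
        ≤ exp (2 * s) * (√3 / (2 * π * (exp s - 1) ^ 2) * lpNorm f₀ 1 volume) := by
          gcongr; exact norm_sol_le_lpNorm_one ht hf₁ _ _
      _ = √3 / (2 * π) * ((1 - exp (-s)) ^ 2)⁻¹ * lpNorm f₀ 1 volume := by
          rw [one_sub_exp_neg_sq_inv]; field_simp
      _ ≤ _ := by gcongr; exact le_max_left _ _
  · gcongr
    exact (norm_sol_le_lpNorm_top ht hfInf _ _).trans (le_max_right _ _)

lemma Cbound_le_of_le {s₀ s : ℝ} (hs₀ : 0 < s₀) (hs : s₀ ≤ s) :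
    Cbound s ≤ √3 / (2 * π) * ((1 - exp (-s₀)) ^ 2)⁻¹ := by
  have h₀ : 0 < 1 - exp (-s₀) := sub_pos.mpr (exp_lt_one_iff.mpr (neg_neg_of_pos hs₀))
  refine (min_le_left _ _).trans ?_
  gcongr

/-- Below `log (5/4)` one has `(e^s - 1)^2 < 1/16 ≤ √3/(2π)`, so the second branch is the
smaller one. -/
lemma Cbound_eq_exp_of_lt {s : ℝ} (hs₀ : 0 < s) (hs : s < log (5 / 4)) :
    Cbound s = exp (2 * s) := by
  have hexp : exp s - 1 < 1 / 4 := by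
    linarith [(exp_lt_exp.mpr hs).trans_eq (exp_log (by norm_num))]
  have hsqrt : 1 ≤ √3 := by
    rw [show (1 : ℝ) = √1 from sqrt_one.symm]; exact sqrt_le_sqrt (by norm_num)
  have hcross : (exp s - 1) ^ 2 ≤ √3 / (2 * π) := by
    rw [le_div_iff₀ (by positivity)]
    have h₀ : 0 ≤ exp s - 1 := sub_nonneg.mpr (one_le_exp hs₀.le)
    nlinarith [pi_le_four]
  have hpos : 0 < (exp s - 1) ^ 2 := by
    have : 1 < exp s := one_lt_exp_iff.mpr hs₀
    positivity
  rw [Cbound, one_sub_exp_neg_sq_inv, min_eq_right]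
  rw [mul_div_assoc', le_div_iff₀ hpos, mul_comm (√3 / (2 * π))]
  exact mul_le_mul_of_nonneg_left hcross (exp_pos _).le

/-- If `f₀ ∈ L¹ ∩ L^∞`, then `‖g̃(s)‖_∞ ≤ C(s) max{‖f₀‖₁, ‖f₀‖_∞}`; moreover `C` is
bounded on `[s₀,∞)` for every `s₀ > 0`, while `C(s) = e^{2s}` for small `s > 0`. -/
theorem stmt_19 (f₀ : ℝ × ℝ → ℝ)
    (hf₁ : MemLp f₀ 1 volume) (hfInf : MemLp f₀ ⊤ volume) :
    (∀ s : ℝ, 0 < s →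
      eLpNorm (fun x : ℝ × ℝ => tg f₀ s x.1 x.2) ⊤ volume
        ≤ ENNReal.ofReal (Cbound s *
            max (eLpNorm f₀ 1 volume).toReal (eLpNorm f₀ ⊤ volume).toReal))
    ∧ (∀ s₀ : ℝ, 0 < s₀ → ∃ M : ℝ, ∀ s : ℝ, s₀ ≤ s → Cbound s ≤ M)
    ∧ (∃ ε : ℝ, 0 < ε ∧ ∀ s : ℝ, 0 < s → s < ε → Cbound s = Real.exp (2 * s)) := by
  refine ⟨fun s hs => ?_, fun s₀ hs₀ => ⟨_, fun s => Cbound_le_of_le hs₀⟩,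
    ⟨log (5 / 4), log_pos (by norm_num), fun s => Cbound_eq_exp_of_lt⟩⟩
  rw [eLpNorm_exponent_top, toReal_eLpNorm hf₁.1, toReal_eLpNorm hfInf.1]
  exact eLpNormEssSup_le_of_ae_bound
    (.of_forall fun x => norm_tg_le (memLp_one_iff_integrable.mp hf₁) hfInf hs x.1 x.2)
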